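/- arXiv:1712.04290 — 3 statements merged into one kernel-verified Lean document; each statement's English description precedes it below -/
import Mathlib

section
/- Let H be a Hilbert space and let T and T̃ be two self-adjoint positive finite-rank operators of the same rank r, with spectral decompositions T = Σ_{j=1}^r λ_j (η_j ⊗ η_j) and T̃ = Σ_{j=1}^r λ̃_j (η̃_j ⊗ η̃_j), where λ_1 ≥ ... ≥ λ_r > 0 and λ̃_1 ≥ ... ≥ λ̃_r > 0. Then the Hilbert–Schmidt norm of the difference of Moore–Penrose inverses satisfies |||T̃⁻ − T⁻|||_HS ≤ Σ_{j=1}^r λ̃_j^{-1} λ_j^{-1} |λ̃_j − λ_j| + 2 Σ_{j=1}^r λ_j^{-1} ‖η̃_j − η_j‖. -/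
/-!
Split each difference `λ̃⁻¹ η̃ ⊗ η̃ − λ⁻¹ η ⊗ η` into the three rank-one operators
`(λ̃⁻¹ − λ⁻¹) η̃ ⊗ η̃`, `λ⁻¹ (η̃ − η) ⊗ η̃` and `λ⁻¹ η ⊗ (η̃ − η)`. The Hilbert–Schmidt Gram matrix of
rank-one operators `u_k ⊗ v_k` is `⟪v_k, v_l⟫ ⟪u_k, u_l⟫` (Parseval in the basis), so by
Cauchy–Schwarz the Hilbert–Schmidt norm of `Σ u_k ⊗ v_k` is at most `Σ ‖u_k‖ ‖v_k‖`; with unit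
eigenvectors this is the claimed bound.
-/

open scoped InnerProductSpace
noncomputable section

variable {H : Type*} [NormedAddCommGroup H] [InnerProductSpace ℝ H]

/-- The rank-one operator `u ⊗ v : w ↦ ⟨w, v⟩ u`. -/
def rankOne (u v : H) : H →L[ℝ] H := (innerSL ℝ v).smulRight u

/-- The Hilbert–Schmidt inner product computed in a Hilbert basis. -/
def hsInner {ι : Type*} (b : HilbertBasis ι ℝ H) (S T : H →L[ℝ] H) : ℝ :=
  ∑' i, ⟪S (b i), T (b i)⟫_ℝ

/-- The Hilbert–Schmidt norm. -/
def hsNorm {ι : Type*} (b : HilbertBasis ι ℝ H) (S : H →L[ℝ] H) : ℝ :=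
  Real.sqrt (hsInner b S S)

open Finset

lemma rankOne_apply (u v w : H) : rankOne u v w = ⟪w, v⟫_ℝ • u := by
  simp [rankOne, real_inner_comm]

lemma smul_rankOne_sub_smul_rankOne (a a' : ℝ) (x x' : H) :
    a' • rankOne x' x' - a • rankOne x x =
      rankOne ((a' - a) • x') x' + rankOne (a • (x' - x)) x' + rankOne (a • x) (x' - x) := by
  ext w
  simp only [sub_apply, add_apply, smul_apply, rankOne_apply, inner_sub_right]
  module

lemma HilbertBasis.hasSum_inner_rankOne_apply {ι : Type*} (b : HilbertBasis ι ℝ H)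
    (u v u' v' : H) :
    HasSum (fun i => ⟪rankOne u v (b i), rankOne u' v' (b i)⟫_ℝ) (⟪v, v'⟫_ℝ * ⟪u, u'⟫_ℝ) := by
  refine ((b.hasSum_inner_mul_inner v v').mul_right ⟪u, u'⟫_ℝ).congr_fun fun i => ?_
  rw [rankOne_apply, rankOne_apply, real_inner_smul_left, real_inner_smul_right,
    real_inner_comm v (b i)]
  ring

lemma hsInner_sum_rankOne {ι κ κ' : Type*} [Fintype κ] [Fintype κ'] (b : HilbertBasis ι ℝ H)
    (u v : κ → H) (u' v' : κ' → H) :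
    hsInner b (∑ k, rankOne (u k) (v k)) (∑ l, rankOne (u' l) (v' l)) =
      ∑ k, ∑ l, ⟪v k, v' l⟫_ℝ * ⟪u k, u' l⟫_ℝ := by
  simp only [hsInner, _root_.sum_apply, sum_inner]
  simp only [inner_sum]
  exact (hasSum_sum fun k _ => hasSum_sum fun l _ =>
    b.hasSum_inner_rankOne_apply (u k) (v k) (u' l) (v' l)).tsum_eq

lemma hsNorm_sum_rankOne_le {ι κ : Type*} [Fintype κ] (b : HilbertBasis ι ℝ H) (u v : κ → H) :
    hsNorm b (∑ k, rankOne (u k) (v k)) ≤ ∑ k, ‖u k‖ * ‖v k‖ := by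
  have hsq : hsInner b (∑ k, rankOne (u k) (v k)) (∑ k, rankOne (u k) (v k)) ≤
      (∑ k, ‖u k‖ * ‖v k‖) ^ 2 := by
    rw [hsInner_sum_rankOne, sq, sum_mul_sum]
    refine sum_le_sum fun k _ => sum_le_sum fun l _ => ?_
    calc ⟪v k, v l⟫_ℝ * ⟪u k, u l⟫_ℝ ≤ |⟪v k, v l⟫_ℝ| * |⟪u k, u l⟫_ℝ| := by
          rw [← abs_mul]; exact le_abs_self _
      _ ≤ (‖v k‖ * ‖v l‖) * (‖u k‖ * ‖u l‖) := by
          gcongr <;> exact abs_real_inner_le_norm _ _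
      _ = ‖u k‖ * ‖v k‖ * (‖u l‖ * ‖v l‖) := by ring
  exact (Real.sqrt_le_left (sum_nonneg fun k _ => by positivity)).2 hsq

lemma abs_inv_sub_inv_of_pos {a b : ℝ} (ha : 0 < a) (hb : 0 < b) :
    |a⁻¹ - b⁻¹| = a⁻¹ * b⁻¹ * |a - b| := by
  rw [inv_sub_inv' ha.ne' hb.ne', abs_mul, abs_mul, abs_sub_comm, abs_of_pos (inv_pos.2 ha),
    abs_of_pos (inv_pos.2 hb)]
  ring

theorem stmt4_general {ι : Type*} (b : HilbertBasis ι ℝ H) (r : ℕ)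
    (η ηt : Fin r → H) (hη : Orthonormal ℝ η) (hηt : Orthonormal ℝ ηt)
    (lam lamt : Fin r → ℝ) (hlam : ∀ j, 0 < lam j) (hlamt : ∀ j, 0 < lamt j) :
    hsNorm b ((∑ j, (lamt j)⁻¹ • rankOne (ηt j) (ηt j)) -
        ∑ j, (lam j)⁻¹ • rankOne (η j) (η j)) ≤
      (∑ j, (lamt j)⁻¹ * (lam j)⁻¹ * |lamt j - lam j|) +
        2 * ∑ j, (lam j)⁻¹ * ‖ηt j - η j‖ := by
  let u : Fin r × Fin 3 → H := fun p =>
    ![((lamt p.1)⁻¹ - (lam p.1)⁻¹) • ηt p.1, (lam p.1)⁻¹ • (ηt p.1 - η p.1),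
      (lam p.1)⁻¹ • η p.1] p.2
  let v : Fin r × Fin 3 → H := fun p => ![ηt p.1, ηt p.1, ηt p.1 - η p.1] p.2
  have hsplit : (∑ j, (lamt j)⁻¹ • rankOne (ηt j) (ηt j)) - ∑ j, (lam j)⁻¹ • rankOne (η j) (η j) =
      ∑ p, rankOne (u p) (v p) := by
    rw [Fintype.sum_prod_type, ← sum_sub_distrib]
    refine sum_congr rfl fun j _ => ?_
    rw [smul_rankOne_sub_smul_rankOne, Fin.sum_univ_three]
    rfl
  calc _ = hsNorm b (∑ p, rankOne (u p) (v p)) := by rw [hsplit]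
    _ ≤ ∑ p, ‖u p‖ * ‖v p‖ := hsNorm_sum_rankOne_le b u v
    _ = ∑ j, (|(lamt j)⁻¹ - (lam j)⁻¹| + 2 * ((lam j)⁻¹ * ‖ηt j - η j‖)) := by
      rw [Fintype.sum_prod_type]
      refine sum_congr rfl fun j _ => ?_
      simp only [u, v, Fin.sum_univ_three, Matrix.cons_val_zero, Matrix.cons_val_one,
        Matrix.cons_val, norm_smul, Real.norm_eq_abs, norm_inv, abs_of_pos (hlam j), hη.1 j,
        hηt.1 j, mul_one]
      ring
    _ = _ := by
      rw [sum_add_distrib, mul_sum]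
      simp only [abs_inv_sub_inv_of_pos (hlamt _) (hlam _)]

/-- For two self-adjoint positive rank-`r` operators `T = Σ λ_j (η_j ⊗ η_j)` and
`T̃ = Σ λ̃_j (η̃_j ⊗ η̃_j)` with decreasing positive eigenvalues, the Moore–Penrose inverses
`T⁻ = Σ λ_j⁻¹(η_j ⊗ η_j)`, `T̃⁻ = Σ λ̃_j⁻¹(η̃_j ⊗ η̃_j)` satisfy
`|||T̃⁻ − T⁻|||_HS ≤ Σ_j λ̃_j⁻¹ λ_j⁻¹ |λ̃_j − λ_j| + 2 Σ_j λ_j⁻¹ ‖η̃_j − η_j‖`. -/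
theorem stmt4 [CompleteSpace H] [TopologicalSpace.SeparableSpace H]
    {ι : Type*} (b : HilbertBasis ι ℝ H) (r : ℕ)
    (η ηt : Fin r → H) (hη : Orthonormal ℝ η) (hηt : Orthonormal ℝ ηt)
    (lam lamt : Fin r → ℝ) (hlam : ∀ j, 0 < lam j) (hlamt : ∀ j, 0 < lamt j)
    (hmono : Antitone lam) (hmonot : Antitone lamt) :
    hsNorm b ((∑ j, (lamt j)⁻¹ • rankOne (ηt j) (ηt j)) -
        ∑ j, (lam j)⁻¹ • rankOne (η j) (η j)) ≤
      (∑ j, (lamt j)⁻¹ * (lam j)⁻¹ * |lamt j - lam j|) +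
        2 * ∑ j, (lam j)⁻¹ * ‖ηt j - η j‖ :=
  stmt4_general b r η ηt hη hηt lam lamt hlam hlamt
end
end

section
/- Let W = X + U be random elements in a separable Hilbert space, where y is a square-integrable real random variable with E(ε | W) = 0 for ε = y − α − ⟨X, β⟩, and where cov(U, y) = 0 (the measurement error is uncorrelated with the response). Then cov(y, W) = cov(y, X) = K_X β, where K_X is the covariance operator of X, provided β lies in the range of K_X; hence β = K_X⁻ cov(y, W) where K_X⁻ is the Moore–Penrose inverse. -/
/-! Since `E(y U) = 0`, `cov(y, W) = cov(y, X)`, and orthogonality of the error to `X` turns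
`cov(y, X)` into `K_X β`, the intercept dropping out because `X` is centred. For a
Moore–Penrose inverse `S`, the operator `S K_X` is symmetric with `K_X (S K_X) = K_X`; taking
adjoints, and using that `K_X` is symmetric, gives `(S K_X) K_X = K_X`, so `S K_X` fixes the
range of `K_X`, which contains `β`. -/

open scoped InnerProductSpace
open MeasureTheory
noncomputable section

variable {H : Type*} [NormedAddCommGroup H] [InnerProductSpace ℝ H]

theorem ContinuousLinearMap.comp_comp_eq_self_of_isSymmetric {𝕜 E : Type*} [RCLike 𝕜]
    [NormedAddCommGroup E] [InnerProductSpace 𝕜 E] {K S : E →L[𝕜] E}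
    (hK : (K : E →ₗ[𝕜] E).IsSymmetric) (hSK : ((S.comp K) : E →ₗ[𝕜] E).IsSymmetric)
    (hKSK : K.comp (S.comp K) = K) :
    (S.comp K).comp K = K := by
  ext a
  refine ext_inner_right 𝕜 fun b => ?_
  calc ⟪S.comp K (K a), b⟫_𝕜 = ⟪K a, S.comp K b⟫_𝕜 := hSK (K a) b
    _ = ⟪a, K.comp (S.comp K) b⟫_𝕜 := hK a _
    _ = ⟪K a, b⟫_𝕜 := by rw [hKSK]; exact (hK a b).symm

section Covariance

variable {Ω : Type*} [MeasurableSpace Ω] {μ : Measure Ω} {X : Ω → H}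

theorem MeasureTheory.MemLp.integrable_inner_smul_self (hX : MemLp X 2 μ) (u : H) :
    Integrable (fun ω => ⟪X ω, u⟫_ℝ • X ω) μ := by
  rw [← memLp_one_iff_integrable]
  refine MemLp.smul hX (hX.inner_const u) (hpqr := ⟨?_⟩)
  rw [inv_one, ENNReal.inv_two_add_inv_two]

theorem inner_integral_inner_smul_self [CompleteSpace H] (hX : MemLp X 2 μ) (a b : H) :
    ⟪∫ ω, ⟪X ω, a⟫_ℝ • X ω ∂μ, b⟫_ℝ = ∫ ω, ⟪X ω, a⟫_ℝ * ⟪X ω, b⟫_ℝ ∂μ := by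
  rw [real_inner_comm, ← integral_inner (hX.integrable_inner_smul_self a)]
  simp only [real_inner_smul_right, real_inner_comm b, mul_comm]

theorem isSymmetric_of_eq_integral_inner_smul_self [CompleteSpace H] (hX : MemLp X 2 μ)
    {K : H →L[ℝ] H} (hK : ∀ v, K v = ∫ ω, ⟪X ω, v⟫_ℝ • X ω ∂μ) :
    (K : H →ₗ[ℝ] H).IsSymmetric := by
  intro a b
  simp only [ContinuousLinearMap.coe_coe]
  rw [hK, hK, inner_integral_inner_smul_self hX, real_inner_comm,
    inner_integral_inner_smul_self hX]
  simp only [mul_comm]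

theorem integral_smul_eq_of_integral_residual_smul_eq_zero [IsFiniteMeasure μ]
    (hX : MemLp X 2 μ) (hX0 : ∫ ω, X ω ∂μ = 0) {y : Ω → ℝ}
    (hyX : Integrable (fun ω => y ω • X ω) μ) {α : ℝ} {β : H}
    (hres : ∫ ω, (y ω - α - ⟪X ω, β⟫_ℝ) • X ω ∂μ = 0) :
    ∫ ω, y ω • X ω ∂μ = ∫ ω, ⟪X ω, β⟫_ℝ • X ω ∂μ := by
  have hαX : Integrable (fun ω => α • X ω) μ := (hX.integrable one_le_two).smul α
  have hyαX : Integrable (fun ω => y ω • X ω - α • X ω) μ := hyX.sub hαX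
  simp only [sub_smul] at hres
  rwa [integral_sub hyαX (hX.integrable_inner_smul_self β), integral_sub hyX hαX,
    integral_smul, hX0, smul_zero, sub_zero, sub_eq_zero] at hres

end Covariance

theorem stmt11_general [CompleteSpace H]
    {Ω : Type*} [MeasurableSpace Ω] (μ : Measure Ω) [IsProbabilityMeasure μ]
    (X U W : Ω → H) (hWdef : ∀ ω, W ω = X ω + U ω)
    (y : Ω → ℝ) (α : ℝ) (β : H)
    (hX2 : MemLp X 2 μ)
    (hX0 : ∫ ω, X ω ∂μ = 0)
    (hεX : ∫ ω, (y ω - α - ⟪X ω, β⟫_ℝ) • X ω ∂μ = 0)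
    (hUy : ∫ ω, y ω • U ω ∂μ = 0)
    (hyXint : Integrable (fun ω => y ω • X ω) μ)
    (hyUint : Integrable (fun ω => y ω • U ω) μ)
    (KX : H →L[ℝ] H) (hKX : ∀ v, KX v = ∫ ω, ⟪X ω, v⟫_ℝ • X ω ∂μ)
    (hrange : ∃ γ, KX γ = β) :
    (∫ ω, y ω • W ω ∂μ = ∫ ω, y ω • X ω ∂μ) ∧
      (∫ ω, y ω • X ω ∂μ = KX β) ∧
      ∀ S : H →L[ℝ] H, KX.comp (S.comp KX) = KX → S.comp (KX.comp S) = S →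
        IsSelfAdjoint (KX.comp S) → IsSelfAdjoint (S.comp KX) →
        S (∫ ω, y ω • W ω ∂μ) = β := by
  have hW : ∫ ω, y ω • W ω ∂μ = ∫ ω, y ω • X ω ∂μ := by
    simp only [hWdef, smul_add]
    rw [integral_add hyXint hyUint, hUy, add_zero]
  have hX : ∫ ω, y ω • X ω ∂μ = KX β := by
    rw [hKX]
    exact integral_smul_eq_of_integral_residual_smul_eq_zero hX2 hX0 hyXint hεX
  refine ⟨hW, hX, fun S hKSK _ _ hSK => ?_⟩
  obtain ⟨γ, rfl⟩ := hrange
  have hproj := KX.comp_comp_eq_self_of_isSymmetric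
    (isSymmetric_of_eq_integral_inner_smul_self hX2 hKX) hSK.isSymmetric hKSK
  rw [hW, hX]
  exact congrArg (fun T : H →L[ℝ] H => T γ) hproj

/-- In the scalar-on-function model `y = α + ⟨X, β⟩ + ε` with `W = X + U`, mean-zero
uncorrelated `X, U`, `E(X ε) = 0`, and `cov(U, y) = 0`, one has
`cov(y, W) = cov(y, X) = K_X β`; hence `β = K_X⁻ cov(y, W)` for any Moore–Penrose
inverse `K_X⁻` of `K_X`, provided `β` lies in the range of `K_X`. -/
theorem stmt11 [CompleteSpace H] [TopologicalSpace.SeparableSpace H]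
    {Ω : Type*} [MeasurableSpace Ω] (μ : Measure Ω) [IsProbabilityMeasure μ]
    (X U W : Ω → H) (hWdef : ∀ ω, W ω = X ω + U ω)
    (y : Ω → ℝ) (α : ℝ) (β : H)
    (hX2 : MemLp X 2 μ) (hU2 : MemLp U 2 μ) (hy2 : MemLp y 2 μ)
    (hX0 : ∫ ω, X ω ∂μ = 0) (hU0 : ∫ ω, U ω ∂μ = 0)
    (huncorr : ∀ u v : H, ∫ ω, ⟪X ω, u⟫_ℝ * ⟪U ω, v⟫_ℝ ∂μ = 0)
    (hεX : ∫ ω, (y ω - α - ⟪X ω, β⟫_ℝ) • X ω ∂μ = 0)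
    (hUy : ∫ ω, y ω • U ω ∂μ = 0)
    (hyXint : Integrable (fun ω => y ω • X ω) μ)
    (hyUint : Integrable (fun ω => y ω • U ω) μ)
    (KX : H →L[ℝ] H) (hKX : ∀ v, KX v = ∫ ω, ⟪X ω, v⟫_ℝ • X ω ∂μ)
    (hrange : ∃ γ, KX γ = β) :
    (∫ ω, y ω • W ω ∂μ = ∫ ω, y ω • X ω ∂μ) ∧
      (∫ ω, y ω • X ω ∂μ = KX β) ∧
      ∀ S : H →L[ℝ] H, KX.comp (S.comp KX) = KX → S.comp (KX.comp S) = S →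
        IsSelfAdjoint (KX.comp S) → IsSelfAdjoint (S.comp KX) →
        S (∫ ω, y ω • W ω ∂μ) = β :=
  stmt11_general μ X U W hWdef y α β hX2 hX0 hεX hUy hyXint hyUint KX hKX hrange
end
end

section
/- Let T_n, T be self-adjoint finite-rank operators on a Hilbert space H with T_n → T in operator norm and rank(T_n) = rank(T) for all sufficiently large n. Then the Moore–Penrose inverses converge: T_n⁻ → T⁻ in operator norm. -/
/-!
Write `T⁺` for the Moore–Penrose inverse. In any C⋆-algebra the identity
`a⁺ - b⁺ = a⁺ (b - a) b⁺ + a⁺ (1 - b b⁺) - (1 - a⁺ a) b⁺`, in which the last two terms can be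
rewritten to contain the factor `a - b` next to star projections, gives
`‖a⁺ - b⁺‖ ≤ (‖a⁺‖ ‖b⁺‖ + ‖a⁺‖² + ‖b⁺‖²) ‖a - b‖`. It therefore suffices to bound `‖T_n⁺‖`
uniformly. For self-adjoint `T` we have `‖y‖ ≤ ‖T⁺‖ ‖T y‖` on the range of `T`, and this lower
bound passes, up to an error `‖T_n - T‖`, to operators of the same finite rank: a nonzero
vector of `range T_n` can be chosen whose projection onto `range T` is parallel to any given
vector there. Since `T_n⁺` maps into `range T_n` and `T_n T_n⁺` is a contraction, this gives
`‖T_n⁺‖ ≤ 2 ‖T⁺‖` eventually.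
-/

open Filter Module
noncomputable section

variable {H : Type*} [NormedAddCommGroup H] [InnerProductSpace ℝ H]

structure IsMoorePenroseInverse {R : Type*} [Mul R] [Star R] (a b : R) : Prop where
  mul_inv_mul : a * (b * a) = a
  inv_mul_inv : b * (a * b) = b
  isSelfAdjoint_mul_inv : IsSelfAdjoint (a * b)
  isSelfAdjoint_inv_mul : IsSelfAdjoint (b * a)

theorem IsSelfAdjoint.norm_mul_comm {R : Type*} [NonUnitalNormedRing R] [StarRing R]
    [NormedStarGroup R] {p q : R} (hp : IsSelfAdjoint p) (hq : IsSelfAdjoint q) :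
    ‖p * q‖ = ‖q * p‖ := by
  rw [← norm_star, star_mul, hp.star_eq, hq.star_eq]

namespace IsMoorePenroseInverse

section StarRing

variable {R : Type*} [Ring R] [StarRing R] {a b : R}

theorem isStarProjection_mul_inv (h : IsMoorePenroseInverse a b) : IsStarProjection (a * b) where
  isIdempotentElem := by rw [IsIdempotentElem, ← mul_assoc, mul_assoc a, h.mul_inv_mul]
  isSelfAdjoint := h.isSelfAdjoint_mul_inv

theorem isStarProjection_inv_mul (h : IsMoorePenroseInverse a b) : IsStarProjection (b * a) where
  isIdempotentElem := by rw [IsIdempotentElem, ← mul_assoc, mul_assoc b, h.inv_mul_inv]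
  isSelfAdjoint := h.isSelfAdjoint_inv_mul

theorem eq_mul_star_mul (h : IsMoorePenroseInverse a b) (ha : IsSelfAdjoint a) :
    b = a * (star b * b) := by
  conv_lhs => rw [← h.inv_mul_inv, ← mul_assoc, ← h.isSelfAdjoint_inv_mul.star_eq, star_mul,
    ha.star_eq, mul_assoc]

theorem inv_mul_mul_self (h : IsMoorePenroseInverse a b) (ha : IsSelfAdjoint a) :
    b * (a * a) = a := by
  have hstar : star (a * (b * a)) = a * (star b * a) := by
    rw [star_mul, star_mul, ha.star_eq, mul_assoc]
  rw [← mul_assoc, ← h.isSelfAdjoint_inv_mul.star_eq, star_mul, ha.star_eq, mul_assoc, ← hstar,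
    h.mul_inv_mul, ha.star_eq]

end StarRing

section CStarRing

variable {R : Type*} [NormedRing R] [StarRing R] [CStarRing R] {a b a' b' : R}

theorem norm_inv_mul_one_sub_le (ha : IsMoorePenroseInverse a a')
    (hb : IsMoorePenroseInverse b b') : ‖a' * (1 - b * b')‖ ≤ ‖a'‖ ^ 2 * ‖a - b‖ := by
  have hP := ha.isStarProjection_mul_inv
  have hQ := hb.isStarProjection_mul_inv.one_sub
  have hQb : (1 - b * b') * b = 0 := by rw [sub_mul, one_mul, mul_assoc, hb.mul_inv_mul, sub_self]
  have hQP : (1 - b * b') * (a * a') = (1 - b * b') * (a - b) * a' := by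
    rw [mul_sub, hQb, sub_zero, mul_assoc]
  calc ‖a' * (1 - b * b')‖ = ‖a' * ((a * a') * (1 - b * b'))‖ := by
        rw [← mul_assoc a', ← mul_assoc a', mul_assoc a' a, ha.inv_mul_inv]
    _ ≤ ‖a'‖ * ‖(a * a') * (1 - b * b')‖ := norm_mul_le _ _
    _ = ‖a'‖ * ‖(1 - b * b') * (a - b) * a'‖ := by
        rw [hP.isSelfAdjoint.norm_mul_comm hQ.isSelfAdjoint, hQP]
    _ ≤ ‖a'‖ * (1 * ‖a - b‖ * ‖a'‖) := by
        gcongr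
        exact norm_mul₃_le.trans (by gcongr; exact hQ.norm_le)
    _ = ‖a'‖ ^ 2 * ‖a - b‖ := by ring

theorem norm_one_sub_inv_mul_le (ha : IsMoorePenroseInverse a a')
    (hb : IsMoorePenroseInverse b b') : ‖(1 - a' * a) * b'‖ ≤ ‖b'‖ ^ 2 * ‖a - b‖ := by
  have hP := ha.isStarProjection_inv_mul.one_sub
  have hQ := hb.isStarProjection_inv_mul
  have haP : a * (1 - a' * a) = 0 := by rw [mul_sub, mul_one, ha.mul_inv_mul, sub_self]
  have hQP : (b' * b) * (1 - a' * a) = b' * (b - a) * (1 - a' * a) := by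
    rw [mul_sub b' b a, sub_mul, mul_assoc b' a, haP, mul_zero, sub_zero]
  calc ‖(1 - a' * a) * b'‖ = ‖((1 - a' * a) * (b' * b)) * b'‖ := by
        rw [mul_assoc, mul_assoc b', hb.inv_mul_inv]
    _ ≤ ‖(1 - a' * a) * (b' * b)‖ * ‖b'‖ := norm_mul_le _ _
    _ = ‖b' * (b - a) * (1 - a' * a)‖ * ‖b'‖ := by
        rw [hP.isSelfAdjoint.norm_mul_comm hQ.isSelfAdjoint, hQP]
    _ ≤ (‖b'‖ * ‖a - b‖ * 1) * ‖b'‖ := by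
        gcongr
        exact norm_mul₃_le.trans (by rw [norm_sub_rev]; gcongr; exact hP.norm_le)
    _ = ‖b'‖ ^ 2 * ‖a - b‖ := by ring

theorem norm_inv_sub_inv_le (ha : IsMoorePenroseInverse a a') (hb : IsMoorePenroseInverse b b') :
    ‖a' - b'‖ ≤ (‖a'‖ * ‖b'‖ + ‖a'‖ ^ 2 + ‖b'‖ ^ 2) * ‖a - b‖ := by
  have hsplit : a' - b' = a' * (b - a) * b' + a' * (1 - b * b') - (1 - a' * a) * b' := by
    noncomm_ring
  have hfirst : ‖a' * (b - a) * b'‖ ≤ ‖a'‖ * ‖b'‖ * ‖a - b‖ := by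
    calc ‖a' * (b - a) * b'‖ ≤ ‖a'‖ * ‖b - a‖ * ‖b'‖ := norm_mul₃_le
      _ = ‖a'‖ * ‖b'‖ * ‖a - b‖ := by rw [norm_sub_rev]; ring
  calc ‖a' - b'‖ ≤ ‖a' * (b - a) * b'‖ + ‖a' * (1 - b * b')‖ + ‖(1 - a' * a) * b'‖ := by
        rw [hsplit]; exact (norm_sub_le _ _).trans (by gcongr; exact norm_add_le _ _)
    _ ≤ _ := by
        linarith [ha.norm_inv_mul_one_sub_le hb, ha.norm_one_sub_inv_mul_le hb]

end CStarRing

section Operator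

variable [CompleteSpace H] {T S : H →L[ℝ] H}

theorem apply_mem_range (h : IsMoorePenroseInverse T S) (hT : IsSelfAdjoint T) (z : H) :
    S z ∈ LinearMap.range (T : H →ₗ[ℝ] H) :=
  ⟨(star S * S) z, (DFunLike.congr_fun (h.eq_mul_star_mul hT) z).symm⟩

theorem norm_le_opNorm_mul_norm_apply (h : IsMoorePenroseInverse T S) (hT : IsSelfAdjoint T)
    {y : H} (hy : y ∈ LinearMap.range (T : H →ₗ[ℝ] H)) : ‖y‖ ≤ ‖S‖ * ‖T y‖ := by
  obtain ⟨x, rfl⟩ := hy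
  calc ‖T x‖ = ‖S (T (T x))‖ := congrArg norm (DFunLike.congr_fun (h.inv_mul_mul_self hT) x).symm
    _ ≤ ‖S‖ * ‖T (T x)‖ := S.le_opNorm _

theorem opNorm_le (h : IsMoorePenroseInverse T S) (hT : IsSelfAdjoint T) {c κ : ℝ} (hc : 0 < c)
    (hκ : 0 ≤ κ) (hbelow : ∀ x ∈ LinearMap.range (T : H →ₗ[ℝ] H), c * ‖x‖ ≤ κ * ‖T x‖) :
    ‖S‖ ≤ c⁻¹ * κ := by
  refine S.opNorm_le_bound (by positivity) fun z => ?_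
  have hcontr : ‖T (S z)‖ ≤ ‖z‖ :=
    ((T * S).le_opNorm z).trans (mul_le_of_le_one_left (norm_nonneg z)
      h.isStarProjection_mul_inv.norm_le)
  rw [mul_assoc, le_inv_mul_iff₀ hc]
  calc c * ‖S z‖ ≤ κ * ‖T (S z)‖ := hbelow _ (h.apply_mem_range hT z)
    _ ≤ κ * ‖z‖ := by gcongr

end Operator

end IsMoorePenroseInverse

theorem Submodule.exists_mem_ne_zero_map_mem_span {K M N : Type*} [Field K] [AddCommGroup M]
    [Module K M] [AddCommGroup N] [Module K N] [FiniteDimensional K N] (f : M →ₗ[K] N)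
    (U : Submodule K M) [FiniteDimensional K U] (h : finrank K N ≤ finrank K U) {x : N}
    (hx : x ≠ 0) : ∃ y ∈ U, y ≠ 0 ∧ f y ∈ (K ∙ x) := by
  set g := (K ∙ x).mkQ ∘ₗ f ∘ₗ U.subtype
  have hdim : finrank K (N ⧸ (K ∙ x)) + 1 = finrank K N := by
    rw [← finrank_span_singleton (K := K) hx]
    exact Submodule.finrank_quotient_add_finrank _
  have hg : ¬ Function.Injective g := fun hinj => by
    have := LinearMap.finrank_le_finrank_of_injective hinj
    omega
  simp only [injective_iff_map_eq_zero, not_forall] at hg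
  obtain ⟨⟨y, hyU⟩, hgy, hy⟩ := hg
  exact ⟨y, hyU, by simpa using hy, by simpa [g, Submodule.Quotient.mk_eq_zero] using hgy⟩

section SelfAdjoint

variable [CompleteSpace H]

theorem IsSelfAdjoint.apply_starProjection_range {A : H →L[ℝ] H} (hA : IsSelfAdjoint A)
    [(LinearMap.range (A : H →ₗ[ℝ] H)).HasOrthogonalProjection] (y : H) :
    A ((LinearMap.range (A : H →ₗ[ℝ] H)).starProjection y) = A y := by
  have hker : y - (LinearMap.range (A : H →ₗ[ℝ] H)).starProjection y ∈
      LinearMap.ker (A : H →ₗ[ℝ] H) := by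
    rw [← ContinuousLinearMap.IsStarNormal.orthogonal_range hA.isStarNormal]
    exact Submodule.sub_starProjection_mem_orthogonal y
  rw [LinearMap.mem_ker, ContinuousLinearMap.coe_coe, map_sub, sub_eq_zero] at hker
  exact hker.symm

theorem one_sub_mul_norm_le_of_finrank_range_eq (A B : H →L[ℝ] H) (hA : IsSelfAdjoint A)
    [FiniteDimensional ℝ (LinearMap.range (A : H →ₗ[ℝ] H))]
    [FiniteDimensional ℝ (LinearMap.range (B : H →ₗ[ℝ] H))]
    (hrank : finrank ℝ (LinearMap.range (A : H →ₗ[ℝ] H)) =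
      finrank ℝ (LinearMap.range (B : H →ₗ[ℝ] H)))
    {κ : ℝ} (hB : ∀ y ∈ LinearMap.range (B : H →ₗ[ℝ] H), ‖y‖ ≤ κ * ‖B y‖)
    {x : H} (hx : x ∈ LinearMap.range (A : H →ₗ[ℝ] H)) :
    (1 - κ * ‖A - B‖) * ‖x‖ ≤ κ * ‖A x‖ := by
  set V := LinearMap.range (A : H →ₗ[ℝ] H)
  rcases eq_or_ne x 0 with rfl | hx0
  · simp
  obtain ⟨y, hyB, hy0, hyx⟩ := Submodule.exists_mem_ne_zero_map_mem_span
    (V.orthogonalProjectionOnto : H →ₗ[ℝ] V) _ hrank.le (x := ⟨x, hx⟩) (by simpa using hx0)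
  obtain ⟨c, hc⟩ := Submodule.mem_span_singleton.mp hyx
  have hproj : V.starProjection y = c • x := by
    simpa using congrArg Subtype.val hc.symm
  have hcx : |c| * ‖x‖ ≤ ‖y‖ := by
    simpa [hproj, norm_smul] using V.norm_starProjection_apply_le y
  have hBy : ‖B y‖ ≤ ‖A - B‖ * ‖y‖ + |c| * ‖A x‖ := by
    calc ‖B y‖ = ‖A y - (A - B) y‖ := by simp
      _ ≤ ‖A y‖ + ‖(A - B) y‖ := norm_sub_le _ _
      _ ≤ |c| * ‖A x‖ + ‖A - B‖ * ‖y‖ := by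
        rw [← hA.apply_starProjection_range, hproj, map_smul, norm_smul, Real.norm_eq_abs]
        gcongr
        exact (A - B).le_opNorm y
      _ = ‖A - B‖ * ‖y‖ + |c| * ‖A x‖ := add_comm _ _
  have hy : 0 < ‖y‖ := norm_pos_iff.mpr hy0
  have hκ : 0 < κ := by
    by_contra! h
    linarith [hB y hyB, mul_nonpos_of_nonpos_of_nonneg h (norm_nonneg (B y))]
  have hyA : (1 - κ * ‖A - B‖) * ‖y‖ ≤ κ * (|c| * ‖A x‖) := by
    nlinarith [hB y hyB, mul_le_mul_of_nonneg_left hBy hκ.le]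
  rcases le_or_gt (1 - κ * ‖A - B‖) 0 with hδ | hδ
  · exact (mul_nonpos_of_nonpos_of_nonneg hδ (norm_nonneg x)).trans (by positivity)
  have hc0 : 0 < |c| := by
    by_contra! h
    rw [le_antisymm h (abs_nonneg c), zero_mul, mul_zero] at hyA
    linarith [mul_pos hδ hy]
  have : |c| * ((1 - κ * ‖A - B‖) * ‖x‖) ≤ |c| * (κ * ‖A x‖) := by
    nlinarith [mul_le_mul_of_nonneg_left hcx hδ.le]
  exact le_of_mul_le_mul_left this hc0

end SelfAdjoint

theorem stmt15_general [CompleteSpace H]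
    (T : ℕ → H →L[ℝ] H) (Tlim : H →L[ℝ] H)
    (hsa : ∀ n, IsSelfAdjoint (T n)) (hsal : IsSelfAdjoint Tlim)
    (hfr : ∀ n, FiniteDimensional ℝ (LinearMap.range (T n : H →ₗ[ℝ] H)))
    (hfrl : FiniteDimensional ℝ (LinearMap.range (Tlim : H →ₗ[ℝ] H)))
    (hconv : Tendsto (fun n => ‖T n - Tlim‖) atTop (nhds 0))
    (hrank : ∀ᶠ n in atTop,
      Module.finrank ℝ (LinearMap.range (T n : H →ₗ[ℝ] H)) = Module.finrank ℝ (LinearMap.range (Tlim : H →ₗ[ℝ] H)))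
    (S : ℕ → H →L[ℝ] H) (Slim : H →L[ℝ] H)
    (hmp : ∀ n, (T n).comp ((S n).comp (T n)) = T n ∧ (S n).comp ((T n).comp (S n)) = S n ∧
      IsSelfAdjoint ((T n).comp (S n)) ∧ IsSelfAdjoint ((S n).comp (T n)))
    (hmpl : Tlim.comp (Slim.comp Tlim) = Tlim ∧ Slim.comp (Tlim.comp Slim) = Slim ∧
      IsSelfAdjoint (Tlim.comp Slim) ∧ IsSelfAdjoint (Slim.comp Tlim)) :
    Tendsto (fun n => ‖S n - Slim‖) atTop (nhds 0) := by
  have hMP n : IsMoorePenroseInverse (T n) (S n) :=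
    ⟨(hmp n).1, (hmp n).2.1, (hmp n).2.2.1, (hmp n).2.2.2⟩
  have hMPl : IsMoorePenroseInverse Tlim Slim := ⟨hmpl.1, hmpl.2.1, hmpl.2.2.1, hmpl.2.2.2⟩
  set κ := ‖Slim‖
  have hsmall : ∀ᶠ n in atTop, κ * ‖T n - Tlim‖ ≤ 1 / 2 :=
    (hconv.const_mul κ).eventually_le_const (by norm_num)
  have hbound : ∀ᶠ n in atTop, ‖S n‖ ≤ 2 * κ := by
    filter_upwards [hrank, hsmall] with n hrn hn
    have := hfr n
    have hbelow (x) (hx : x ∈ LinearMap.range (T n : H →ₗ[ℝ] H)) : 1 / 2 * ‖x‖ ≤ κ * ‖T n x‖ :=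
      (mul_le_mul_of_nonneg_right (by linarith) (norm_nonneg x)).trans
        (one_sub_mul_norm_le_of_finrank_range_eq (T n) Tlim (hsa n) hrn
          (fun y hy => hMPl.norm_le_opNorm_mul_norm_apply hsal hy) hx)
    simpa using (hMP n).opNorm_le (hsa n) (by norm_num) (norm_nonneg Slim) hbelow
  refine squeeze_zero' (Eventually.of_forall fun n => norm_nonneg _) ?_
    (by simpa using hconv.const_mul (7 * κ ^ 2))
  filter_upwards [hbound] with n hn
  calc ‖S n - Slim‖ ≤ (‖S n‖ * κ + ‖S n‖ ^ 2 + κ ^ 2) * ‖T n - Tlim‖ :=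
        (hMP n).norm_inv_sub_inv_le hMPl
    _ ≤ 7 * κ ^ 2 * ‖T n - Tlim‖ := by gcongr; nlinarith [norm_nonneg (S n)]

/-- If `T_n → T` in operator norm with all `T_n, T` self-adjoint and finite rank, with
`rank T_n = rank T` for all sufficiently large `n`, then the Moore–Penrose inverses converge
in operator norm: `T_n⁻ → T⁻`. -/
theorem stmt15 [CompleteSpace H] [TopologicalSpace.SeparableSpace H]
    (T : ℕ → H →L[ℝ] H) (Tlim : H →L[ℝ] H)
    (hsa : ∀ n, IsSelfAdjoint (T n)) (hsal : IsSelfAdjoint Tlim)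
    (hfr : ∀ n, FiniteDimensional ℝ (LinearMap.range (T n : H →ₗ[ℝ] H)))
    (hfrl : FiniteDimensional ℝ (LinearMap.range (Tlim : H →ₗ[ℝ] H)))
    (hconv : Tendsto (fun n => ‖T n - Tlim‖) atTop (nhds 0))
    (hrank : ∀ᶠ n in atTop,
      Module.finrank ℝ (LinearMap.range (T n : H →ₗ[ℝ] H)) = Module.finrank ℝ (LinearMap.range (Tlim : H →ₗ[ℝ] H)))
    (S : ℕ → H →L[ℝ] H) (Slim : H →L[ℝ] H)
    (hmp : ∀ n, (T n).comp ((S n).comp (T n)) = T n ∧ (S n).comp ((T n).comp (S n)) = S n ∧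
      IsSelfAdjoint ((T n).comp (S n)) ∧ IsSelfAdjoint ((S n).comp (T n)))
    (hmpl : Tlim.comp (Slim.comp Tlim) = Tlim ∧ Slim.comp (Tlim.comp Slim) = Slim ∧
      IsSelfAdjoint (Tlim.comp Slim) ∧ IsSelfAdjoint (Slim.comp Tlim)) :
    Tendsto (fun n => ‖S n - Slim‖) atTop (nhds 0) :=
  stmt15_general T Tlim hsa hsal hfr hfrl hconv hrank S Slim hmp hmpl
end
end
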